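/- arXiv:2204.09928 — 5 statements merged into one kernel-verified Lean document; each statement's English description precedes it below -/
import Mathlib

section
/- For all real n×k matrices X and Y, XX^T = YY^T if and only if there exists an orthogonal k×k matrix U such that XU = Y. -/
/-!
If `X Xᴴ = Y Yᴴ`, then `‖Xᴴ u‖² = ⟪u, X Xᴴ u⟫ = ‖Yᴴ u‖²` for every `u`, so `Xᴴ u ↦ Yᴴ u` is a
well-defined linear isometry from the range of `Xᴴ` into `𝕜ᵏ`. It extends to an isometry `V` of
all of `𝕜ᵏ`, whose matrix is unitary, and `V Xᴴ = Yᴴ` gives `X Vᴴ = Y`. The converse is the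
computation `X U (X U)ᴴ = X (U Uᴴ) Xᴴ`.
-/

open Matrix

theorem LinearMap.exists_linearIsometry_comp_eq_of_norm_eq {𝕜 E F : Type*} [RCLike 𝕜]
    [AddCommGroup E] [Module 𝕜 E] [NormedAddCommGroup F] [InnerProductSpace 𝕜 F]
    [FiniteDimensional 𝕜 F] {A B : E →ₗ[𝕜] F} (h : ∀ u, ‖A u‖ = ‖B u‖) :
    ∃ Φ : F →ₗᵢ[𝕜] F, Φ.toLinearMap ∘ₗ A = B := by
  have hker : LinearMap.ker A ≤ LinearMap.ker B := fun u hu => by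
    rw [LinearMap.mem_ker] at hu ⊢
    rw [← norm_eq_zero, ← h, hu, norm_zero]
  let g : LinearMap.range A →ₗ[𝕜] F :=
    (LinearMap.ker A).liftQ B hker ∘ₗ A.quotKerEquivRange.symm.toLinearMap
  have hg : ∀ u, g ⟨A u, LinearMap.mem_range_self A u⟩ = B u := fun u => by
    simp [g]
  let L : LinearMap.range A →ₗᵢ[𝕜] F :=
    ⟨g, by rintro ⟨_, u, rfl⟩; rw [hg]; exact (h u).symm⟩
  exact ⟨L.extend, LinearMap.ext fun u =>
    (L.extend_apply ⟨A u, LinearMap.mem_range_self A u⟩).trans (hg u)⟩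

namespace Matrix

variable {𝕜 m n : Type*} [RCLike 𝕜] [Fintype m] [DecidableEq m] [Fintype n] [DecidableEq n]

theorem conjTranspose_mul_self_eq_one_of_toEuclideanLin_eq {M : Matrix m n 𝕜}
    {Φ : EuclideanSpace 𝕜 n →ₗᵢ[𝕜] EuclideanSpace 𝕜 m} (h : toEuclideanLin M = Φ.toLinearMap) :
    Mᴴ * M = 1 := by
  apply toEuclideanLin.injective
  rw [toLpLin_mul, toEuclideanLin_conjTranspose_eq_adjoint, h, Φ.adjoint_comp_self']
  simp

theorem sq_norm_toEuclideanLin_conjTranspose_apply (X : Matrix m n 𝕜) (u : EuclideanSpace 𝕜 m) :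
    ‖toEuclideanLin Xᴴ u‖ ^ 2 = RCLike.re (inner 𝕜 u (toEuclideanLin (X * Xᴴ) u)) := by
  rw [norm_sq_eq_re_inner (𝕜 := 𝕜), toEuclideanLin_conjTranspose_eq_adjoint, LinearMap.adjoint_inner_left,
    ← toEuclideanLin_conjTranspose_eq_adjoint, toLpLin_mul, LinearMap.comp_apply]

theorem mul_conjTranspose_self_eq_iff (X Y : Matrix m n 𝕜) :
    X * Xᴴ = Y * Yᴴ ↔ ∃ U : Matrix n n 𝕜, Uᴴ * U = 1 ∧ X * U = Y := by
  constructor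
  · intro h
    have hnorm : ∀ u, ‖toEuclideanLin Xᴴ u‖ = ‖toEuclideanLin Yᴴ u‖ := fun u => by
      rw [← sq_eq_sq₀ (norm_nonneg _) (norm_nonneg _), sq_norm_toEuclideanLin_conjTranspose_apply,
        sq_norm_toEuclideanLin_conjTranspose_apply, h]
    obtain ⟨Φ, hΦ⟩ := LinearMap.exists_linearIsometry_comp_eq_of_norm_eq hnorm
    set V := toEuclideanLin.symm Φ.toLinearMap
    have hV : toEuclideanLin V = Φ.toLinearMap := toEuclideanLin.apply_symm_apply _
    have hVX : V * Xᴴ = Yᴴ := toEuclideanLin.injective (by rw [toLpLin_mul, hV, hΦ])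
    refine ⟨Vᴴ, ?_, ?_⟩
    · rw [conjTranspose_conjTranspose, mul_eq_one_comm]
      exact conjTranspose_mul_self_eq_one_of_toEuclideanLin_eq hV
    · rw [← conjTranspose_conjTranspose X, ← conjTranspose_mul, hVX, conjTranspose_conjTranspose]
  · rintro ⟨U, hU, rfl⟩
    rw [conjTranspose_mul, Matrix.mul_assoc, ← Matrix.mul_assoc U, mul_eq_one_comm.mp hU,
      Matrix.one_mul]

end Matrix

theorem square_roots_related_by_orthogonal (n k : ℕ)
    (X Y : Matrix (Fin n) (Fin k) ℝ) :
    X * Xᵀ = Y * Yᵀ ↔ ∃ U : Matrix (Fin k) (Fin k) ℝ, Uᵀ * U = 1 ∧ X * U = Y := by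
  simpa only [conjTranspose_eq_transpose_of_trivial] using mul_conjTranspose_self_eq_iff X Y
end

section
/- The Bures-Wasserstein distance d(Σ,Λ) = inf over orthogonal R of the Frobenius distance between Σ^{1/2} and Λ^{1/2}R equals tr(Σ + Λ − 2(Σ^{1/2} Λ Σ^{1/2})^{1/2})^{1/2}, for all symmetric positive semi-definite n×n matrices Σ, Λ. -/
open Matrix

open Classical in
/-- The symmetric PSD square root of a PSD matrix (junk value `0` otherwise). -/
noncomputable def psdSqrt {n : ℕ} (A : Matrix (Fin n) (Fin n) ℝ) : Matrix (Fin n) (Fin n) ℝ :=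
  if h : A.PosSemidef then
    h.1.eigenvectorUnitary.1 * diagonal ((↑) ∘ Real.sqrt ∘ h.1.eigenvalues) *
      (star h.1.eigenvectorUnitary : Matrix (Fin n) (Fin n) ℝ) else 0

/-- Frobenius (Euclidean) distance between matrices. -/
noncomputable def frobDist {m k : ℕ} (A B : Matrix (Fin m) (Fin k) ℝ) : ℝ :=
  Real.sqrt (((A - B)ᵀ * (A - B)).trace)

open scoped InnerProductSpace

/-!
Expanding the square, `‖Σ^{1/2} - Λ^{1/2} R‖² = tr Σ + tr Λ - 2 tr (N R)` with
`N = Σ^{1/2} Λ^{1/2}`, so the infimum is taken at a maximiser of `tr (N R)` over `O(n)`.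
If `V` diagonalises `N Nᵀ = Σ^{1/2} Λ Σ^{1/2}`, the rows `kᵢ` of `K = Vᵀ N` are
orthogonal with `‖kᵢ‖²` the eigenvalues of `N Nᵀ`, and `tr (N R) = ∑ ⟪kᵢ, qᵢ⟫` for the
columns `qᵢ` of the orthogonal matrix `R V`. Cauchy–Schwarz bounds this by
`∑ ‖kᵢ‖ = tr (N Nᵀ)^{1/2}`, with equality when the `qᵢ` extend the normalised nonzero rows
to an orthonormal basis.
-/

section PsdSqrt

variable {n : ℕ} {A : Matrix (Fin n) (Fin n) ℝ}

lemma transpose_psdSqrt (A : Matrix (Fin n) (Fin n) ℝ) : (psdSqrt A)ᵀ = psdSqrt A := by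
  unfold psdSqrt
  split_ifs
  · simp [← conjTranspose_eq_transpose_of_trivial, star_eq_conjTranspose, Matrix.mul_assoc]
  · exact transpose_zero

lemma psdSqrt_mul_self (hA : A.PosSemidef) : psdSqrt A * psdSqrt A = A := by
  set V : Matrix (Fin n) (Fin n) ℝ := hA.1.eigenvectorUnitary.1
  set D : Matrix (Fin n) (Fin n) ℝ := diagonal (Real.sqrt ∘ hA.1.eigenvalues)
  have hV : star V * V = 1 := Unitary.coe_star_mul_self _
  have hD : D * D = diagonal (RCLike.ofReal ∘ hA.1.eigenvalues) := by
    simp [D, diagonal_mul_diagonal, Real.mul_self_sqrt (hA.eigenvalues_nonneg _)]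
  calc psdSqrt A * psdSqrt A = V * (D * (star V * V) * D) * star V := by
        simp only [psdSqrt, dif_pos hA, Matrix.mul_assoc]; rfl
    _ = A := by
        rw [hV, Matrix.mul_one, hD]
        conv_rhs => rw [hA.1.spectral_theorem]
        rfl

lemma trace_psdSqrt (hA : A.PosSemidef) :
    (psdSqrt A).trace = ∑ i, √(hA.1.eigenvalues i) := by
  rw [psdSqrt, dif_pos hA, trace_mul_cycle, Unitary.coe_star_mul_self, Matrix.one_mul,
    trace_diagonal]
  rfl

end PsdSqrt

section InnerProductSpace

variable {ι E : Type*} [Fintype ι] [NormedAddCommGroup E] [InnerProductSpace ℝ E]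

lemma sum_inner_le_sum_norm (v : ι → E) {w : ι → E} (hw : ∀ i, ‖w i‖ ≤ 1) :
    ∑ i, ⟪v i, w i⟫_ℝ ≤ ∑ i, ‖v i‖ :=
  Finset.sum_le_sum fun i _ => (real_inner_le_norm _ _).trans
    (mul_le_of_le_one_right (norm_nonneg _) (hw i))

lemma exists_orthonormalBasis_sum_inner_eq_sum_norm [FiniteDimensional ℝ E]
    (hcard : Module.finrank ℝ E = Fintype.card ι) {v : ι → E}
    (hv : Pairwise fun i j => ⟪v i, v j⟫_ℝ = 0) :
    ∃ b : OrthonormalBasis ι ℝ E, ∑ i, ⟪v i, b i⟫_ℝ = ∑ i, ‖v i‖ := by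
  let u : ι → E := fun i => ‖v i‖⁻¹ • v i
  have hu : Orthonormal ℝ (Set.domRestrict {i | v i ≠ 0} u) := by
    refine ⟨fun i => norm_smul_inv_norm i.2, fun i j hij => ?_⟩
    simp only [Set.domRestrict_apply, u, real_inner_smul_left, real_inner_smul_right,
      hv (Subtype.coe_ne_coe.2 hij), mul_zero]
  obtain ⟨b, hb⟩ := hu.exists_orthonormalBasis_extension_of_card_eq hcard
  refine ⟨b, Finset.sum_congr rfl fun i _ => ?_⟩
  by_cases hi : v i = 0
  · simp [hi]
  · rw [hb i hi, real_inner_smul_right, real_inner_self_eq_norm_sq]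
    field_simp [norm_ne_zero_iff.2 hi]

end InnerProductSpace

namespace Matrix

variable {ι : Type*} [Fintype ι]

lemma inner_toLp_row (K L : Matrix ι ι ℝ) (i j : ι) :
    ⟪WithLp.toLp 2 (K i), WithLp.toLp 2 (L j)⟫_ℝ = (K * Lᵀ) i j := by
  simp [EuclideanSpace.inner_toLp_toLp, mul_apply, dotProduct, mul_comm]

lemma norm_toLp_row (K : Matrix ι ι ℝ) (i : ι) :
    ‖WithLp.toLp 2 (K i)‖ = √((K * Kᵀ) i i) := by
  rw [norm_eq_sqrt_real_inner, inner_toLp_row]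

lemma trace_mul_eq_sum_inner (K Q : Matrix ι ι ℝ) :
    (K * Q).trace = ∑ i, ⟪WithLp.toLp 2 (K i), WithLp.toLp 2 (Qᵀ i)⟫_ℝ := by
  simp only [inner_toLp_row, transpose_transpose]
  rfl

variable [DecidableEq ι]

lemma trace_mul_le_sum_norm_row (K : Matrix ι ι ℝ) {Q : Matrix ι ι ℝ}
    (hQ : Q ∈ orthogonalGroup ι ℝ) :
    (K * Q).trace ≤ ∑ i, ‖WithLp.toLp 2 (K i)‖ := by
  rw [trace_mul_eq_sum_inner]
  refine sum_inner_le_sum_norm _ fun i => ?_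
  rw [norm_toLp_row, transpose_transpose, (mem_orthogonalGroup_iff' ..).1 hQ, one_apply_eq,
    Real.sqrt_one]

lemma exists_trace_mul_eq_sum_norm_row {K : Matrix ι ι ℝ} (hK : (K * Kᵀ).IsDiag) :
    ∃ Q ∈ orthogonalGroup ι ℝ, (K * Q).trace = ∑ i, ‖WithLp.toLp 2 (K i)‖ := by
  obtain ⟨b, hb⟩ := exists_orthonormalBasis_sum_inner_eq_sum_norm (by simp)
    (v := fun i => WithLp.toLp 2 (K i)) fun i j hij => (inner_toLp_row K K i j).trans (hK hij)
  refine ⟨(EuclideanSpace.basisFun ι ℝ).toBasis.toMatrix b,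
    (EuclideanSpace.basisFun ι ℝ).toMatrix_orthonormalBasis_mem_orthogonal b, ?_⟩
  rw [trace_mul_eq_sum_inner, ← hb]
  rfl

lemma trace_transpose_sub_mul_sub {α : Type*} [CommRing α] {S T R : Matrix ι ι α}
    (hS : Sᵀ = S) (hT : Tᵀ = T) (hR : R ∈ orthogonalGroup ι α) :
    ((S - T * R)ᵀ * (S - T * R)).trace
      = (S * S).trace + (T * T).trace - 2 * (S * T * R).trace := by
  have hRR : R * Rᵀ = 1 := (mem_orthogonalGroup_iff ..).1 hR
  have hcross : (Rᵀ * T * S).trace = (S * T * R).trace := by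
    rw [← trace_transpose, transpose_mul, transpose_mul, transpose_transpose, hS, hT,
      Matrix.mul_assoc]
  have hlast : (Rᵀ * (T * T) * R).trace = (T * T).trace := by
    rw [trace_mul_cycle, hRR, Matrix.one_mul]
  rw [transpose_sub, transpose_mul, hS, hT]
  simp only [Matrix.sub_mul, Matrix.mul_sub, trace_sub, ← Matrix.mul_assoc] at hlast ⊢
  rw [hcross, hlast]
  ring

end Matrix

lemma frobDist_psdSqrt_psdSqrt_mul {n : ℕ} {A B R : Matrix (Fin n) (Fin n) ℝ}
    (hA : A.PosSemidef) (hB : B.PosSemidef) (hR : R ∈ orthogonalGroup (Fin n) ℝ) :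
    frobDist (psdSqrt A) (psdSqrt B * R)
      = √(A.trace + B.trace - 2 * (psdSqrt A * psdSqrt B * R).trace) := by
  rw [frobDist, trace_transpose_sub_mul_sub (transpose_psdSqrt A) (transpose_psdSqrt B) hR,
    psdSqrt_mul_self hA, psdSqrt_mul_self hB]

lemma isGreatest_trace_mul_orthogonalGroup {n : ℕ} (N : Matrix (Fin n) (Fin n) ℝ) :
    IsGreatest ((fun R => (N * R).trace) '' orthogonalGroup (Fin n) ℝ)
      (psdSqrt (N * Nᵀ)).trace := by
  have hX : (N * Nᵀ).PosSemidef := by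
    simpa using posSemidef_self_mul_conjTranspose N
  set V : Matrix (Fin n) (Fin n) ℝ := hX.1.eigenvectorUnitary.1
  have hV : V ∈ orthogonalGroup (Fin n) ℝ := hX.1.eigenvectorUnitary.2
  set K := Vᵀ * N
  have hKK : K * Kᵀ = diagonal hX.1.eigenvalues := by
    have hdiag := hX.1.conjStarAlgAut_star_eigenvectorUnitary
    rw [Unitary.conjStarAlgAut_apply, Unitary.coe_star, star_star, star_eq_conjTranspose,
      conjTranspose_eq_transpose_of_trivial] at hdiag
    simpa [K, Matrix.mul_assoc] using hdiag
  have hnorm : ∑ i, ‖WithLp.toLp 2 (K i)‖ = (psdSqrt (N * Nᵀ)).trace := by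
    simp [norm_toLp_row, hKK, trace_psdSqrt hX]
  have htrace (R : Matrix (Fin n) (Fin n) ℝ) : (K * (R * V)).trace = (N * R).trace := by
    calc (K * (R * V)).trace = (Vᵀ * (N * R * V)).trace := by simp only [K, Matrix.mul_assoc]
      _ = (N * R * (V * Vᵀ)).trace := by rw [trace_mul_comm, Matrix.mul_assoc]
      _ = (N * R).trace := by rw [(mem_orthogonalGroup_iff ..).1 hV, Matrix.mul_one]
  constructor
  · obtain ⟨Q, hQ, hQK⟩ := exists_trace_mul_eq_sum_norm_row (hKK ▸ isDiag_diagonal _)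
    refine ⟨Q * Vᵀ, mul_mem hQ ?_, ?_⟩
    · rw [mem_orthogonalGroup_iff', transpose_transpose]
      exact (mem_orthogonalGroup_iff ..).1 hV
    · dsimp only
      rw [← htrace, Matrix.mul_assoc Q, (mem_orthogonalGroup_iff' ..).1 hV, Matrix.mul_one,
        hQK, hnorm]
  · rintro _ ⟨R, hR, rfl⟩
    dsimp only
    rw [← htrace, ← hnorm]
    exact trace_mul_le_sum_norm_row K (mul_mem hR hV)

theorem buresWasserstein_dist_formula (n : ℕ) (A B : Matrix (Fin n) (Fin n) ℝ)
    (hA : A.PosSemidef) (hB : B.PosSemidef) :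
    (⨅ R : {R : Matrix (Fin n) (Fin n) ℝ // Rᵀ * R = 1},
        frobDist (psdSqrt A) (psdSqrt B * R.1))
      = Real.sqrt ((A + B - 2 • psdSqrt (psdSqrt A * B * psdSqrt A)).trace) := by
  have hN : psdSqrt A * psdSqrt B * (psdSqrt A * psdSqrt B)ᵀ = psdSqrt A * B * psdSqrt A := by
    rw [transpose_mul, transpose_psdSqrt, transpose_psdSqrt, Matrix.mul_assoc,
      ← Matrix.mul_assoc (psdSqrt B), psdSqrt_mul_self hB, Matrix.mul_assoc]
  obtain ⟨⟨R₀, hR₀, hR₀tr⟩, hmax⟩ :=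
    hN ▸ isGreatest_trace_mul_orthogonalGroup (psdSqrt A * psdSqrt B)
  have hleast : IsLeast (Set.range fun R : {R : Matrix (Fin n) (Fin n) ℝ // Rᵀ * R = 1} =>
      frobDist (psdSqrt A) (psdSqrt B * R.1))
      √(A.trace + B.trace - 2 * (psdSqrt (psdSqrt A * B * psdSqrt A)).trace) := by
    constructor
    · refine ⟨⟨R₀, (mem_orthogonalGroup_iff' ..).1 hR₀⟩, ?_⟩
      dsimp only
      rw [frobDist_psdSqrt_psdSqrt_mul hA hB hR₀, ← hR₀tr]
    · rintro _ ⟨⟨R, hR⟩, rfl⟩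
      rw [← mem_orthogonalGroup_iff'] at hR
      dsimp only
      rw [frobDist_psdSqrt_psdSqrt_mul hA hB hR]
      gcongr
      exact hmax ⟨R, hR, rfl⟩
  rw [trace_sub, trace_add, trace_smul, nsmul_eq_mul, Nat.cast_ofNat]
  exact hleast.csInf_eq
end

section
/- For Σ ∈ Sym⁺(n) and V ∈ Sym(n), the matrix Σ + tV + t² S_Σ(V) Σ S_Σ(V) equals (I + tS_Σ(V)) Σ (I + tS_Σ(V)), and hence is positive definite if and only if I + tS_Σ(V) is invertible, i.e., −1/t is not an eigenvalue of S_Σ(V). -/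
/-!
Expanding `(1 + tS) A (1 + tS)` leaves the cross term `t (AS + SA)`, which the Sylvester equation
turns into `tV`. A congruence `B A B` of a positive definite `A` by a symmetric `B` is positive
definite exactly when `B` is injective, and `(1 + tS) x = 0` says that `x` is an eigenvector
of `S` for `-1/t`.
-/

open Matrix

theorem one_add_smul_mul_mul_one_add_smul {𝕜 R : Type*} [CommRing 𝕜] [Ring R] [Algebra 𝕜 R]
    (t : 𝕜) (a s : R) :
    (1 + t • s) * a * (1 + t • s) = a + t • (a * s + s * a) + t ^ 2 • (s * a * s) := by
  simp only [add_mul, mul_add, one_mul, mul_one, smul_mul_assoc, mul_smul_comm, smul_add, smul_smul]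
  noncomm_ring

namespace Matrix

variable {n K : Type*} [Fintype n] [DecidableEq n]

theorem PosDef.mul_mul_self_iff_isUnit [Field K] [PartialOrder K] [StarRing K]
    {A B : Matrix n n K} (hA : A.PosDef) (hB : B.IsHermitian) :
    (B * A * B).PosDef ↔ IsUnit B := by
  refine ⟨fun h => isUnit_of_mul_isUnit_right h.isUnit, fun hU => ?_⟩
  have := hA.conjTranspose_mul_mul_same (mulVec_injective_of_isUnit hU)
  rwa [hB.eq] at this

theorem one_add_smul_mulVec_eq_zero_iff [Field K] {S : Matrix n n K} {t : K} (ht : t ≠ 0)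
    (x : n → K) : (1 + t • S) *ᵥ x = 0 ↔ S *ᵥ x = (-1 / t) • x := by
  rw [add_mulVec, one_mulVec, smul_mulVec, add_eq_zero_iff_neg_eq,
    ← inv_smul_eq_iff₀ ht, eq_comm, smul_neg, ← neg_smul, neg_div, one_div]

theorem isUnit_one_add_smul_iff [Field K] {S : Matrix n n K} {t : K} (ht : t ≠ 0) :
    IsUnit (1 + t • S) ↔ ¬ ∃ x : n → K, x ≠ 0 ∧ S *ᵥ x = (-1 / t) • x := by
  simp_rw [isUnit_iff_isUnit_det, isUnit_iff_ne_zero, ne_eq, ← exists_mulVec_eq_zero_iff,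
    one_add_smul_mulVec_eq_zero_iff ht]

end Matrix

theorem geodesic_factorization_and_posdef_general (n : ℕ)
    (A V S : Matrix (Fin n) (Fin n) ℝ) (t : ℝ) (ht : t ≠ 0)
    (hA : A.PosDef) (hS : Sᵀ = S) (hSyl : A * S + S * A = V) :
    A + t • V + (t ^ 2) • (S * A * S) = (1 + t • S) * A * (1 + t • S) ∧
    ((A + t • V + (t ^ 2) • (S * A * S)).PosDef ↔ IsUnit (1 + t • S)) ∧
    (IsUnit (1 + t • S) ↔
      ¬ ∃ x : Fin n → ℝ, x ≠ 0 ∧ S.mulVec x = (-1 / t) • x) := by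
  have hfac : A + t • V + (t ^ 2) • (S * A * S) = (1 + t • S) * A * (1 + t • S) := by
    rw [one_add_smul_mul_mul_one_add_smul, hSyl]
  have hB : (1 + t • S).IsHermitian := by
    simp only [IsHermitian, conjTranspose_eq_transpose_of_trivial, transpose_add, transpose_one,
      transpose_smul, hS]
  exact ⟨hfac, hfac ▸ hA.mul_mul_self_iff_isUnit hB, isUnit_one_add_smul_iff ht⟩

theorem geodesic_factorization_and_posdef (n : ℕ)
    (A V S : Matrix (Fin n) (Fin n) ℝ) (t : ℝ) (ht : t ≠ 0)
    (hA : A.PosDef) (hV : Vᵀ = V) (hS : Sᵀ = S) (hSyl : A * S + S * A = V) :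
    A + t • V + (t ^ 2) • (S * A * S) = (1 + t • S) * A * (1 + t • S) ∧
    ((A + t • V + (t ^ 2) • (S * A * S)).PosDef ↔ IsUnit (1 + t • S)) ∧
    (IsUnit (1 + t • S) ↔
      ¬ ∃ x : Fin n → ℝ, x ≠ 0 ∧ S.mulVec x = (-1 / t) • x) :=
  geodesic_factorization_and_posdef_general n A V S t ht hA hS hSyl
end

section
/- Let X ∈ ℝ^{n×k} have full rank k and X_⊥ ∈ ℝ^{n×(n−k)} have orthonormal columns orthogonal to those of X. Then a symmetric matrix V ∈ Sym(n) satisfies X_⊥^T V X_⊥ = 0 if and only if V = XW^T + WX^T for some W ∈ ℝ^{n×k}, i.e., the tangent space to Sym⁺(n,k) at Σ = XX^T is {V ∈ Sym(n) : X_⊥^T V X_⊥ = 0}. -/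
/-!
Let `P = X (XᵀX)⁻¹ Xᵀ` be the orthogonal projector onto the column space of `X`. Since the
columns of `X` and `X_⊥` together form a basis, `X_⊥ X_⊥ᵀ = 1 - P`, so `X_⊥ᵀ V X_⊥ = 0` means
`(1 - P) V (1 - P) = 0`, i.e. `V = PV + VP - PVP`. For symmetric `V` this is `XWᵀ + WXᵀ` with
`W = (1 - P/2) V X (XᵀX)⁻¹`.
-/

open Matrix

theorem eq_add_sub_of_one_sub_mul_mul_one_sub_eq_zero {R : Type*} [Ring R] {p v : R}
    (h : (1 - p) * v * (1 - p) = 0) : v = p * v + v * p - p * v * p := by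
  rw [← sub_eq_zero, ← h]
  noncomm_ring

namespace Matrix

variable {m n l K : Type*} [Fintype m] [Fintype n] [DecidableEq n] [Field K]

theorem isUnit_of_rank_eq_card {A : Matrix n n K} (h : A.rank = Fintype.card n) : IsUnit A := by
  rw [← mulVec_surjective_iff_isUnit]
  have : LinearMap.range A.mulVecLin = ⊤ :=
    Submodule.eq_top_of_finrank_eq (by rw [← rank, h, Module.finrank_fintype_fun_eq_card])
  exact LinearMap.range_eq_top.mp this

/-- A projector only when `Xᵀ * X` is invertible, since otherwise `⁻¹` returns `0`. -/
noncomputable def colProj (X : Matrix m n K) : Matrix m m K := X * ((Xᵀ * X)⁻¹ * Xᵀ)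

theorem colProj_transpose (X : Matrix m n K) : (colProj X)ᵀ = colProj X := by
  simp only [colProj, transpose_mul, transpose_transpose, transpose_nonsing_inv, Matrix.mul_assoc]

theorem colProj_add_mul_transpose_eq_one [Fintype l] [DecidableEq m] [DecidableEq l]
    {X : Matrix m n K} {Y : Matrix m l K} (hX : IsUnit (Xᵀ * X).det) (hY : Yᵀ * Y = 1)
    (hXY : Xᵀ * Y = 0) (e : m ≃ n ⊕ l) : colProj X + Y * Yᵀ = 1 := by
  have hYX : Yᵀ * X = 0 := by rw [← transpose_transpose X, ← transpose_mul, hXY, transpose_zero]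
  have hleft : fromRows ((Xᵀ * X)⁻¹ * Xᵀ) Yᵀ * fromCols X Y = 1 := by
    rw [fromRows_mul_fromCols, Matrix.mul_assoc, Matrix.mul_assoc, nonsing_inv_mul _ hX, hXY,
      Matrix.mul_zero, hYX, hY, fromBlocks_one]
  rw [colProj, ← fromCols_mul_fromRows]
  exact (fromCols_mul_fromRows_eq_one_comm e _ _ _ _).mpr hleft

theorem mul_transpose_add_eq_colProj [DecidableEq m] [NeZero (2 : K)] (X : Matrix m n K)
    {V : Matrix m m K} (hV : Vᵀ = V) (W : Matrix m n K)
    (hW : W = (1 - (2⁻¹ : K) • colProj X) * V * (X * (Xᵀ * X)⁻¹)) :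
    X * Wᵀ + W * Xᵀ = colProj X * V + V * colProj X - colProj X * V * colProj X := by
  have hXW : X * Wᵀ = colProj X * V * (1 - (2⁻¹ : K) • colProj X) := by
    rw [hW]
    simp only [transpose_mul, transpose_sub, transpose_one, transpose_smul, colProj_transpose, hV,
      transpose_nonsing_inv, transpose_transpose]
    simp only [colProj, Matrix.mul_assoc]
  have hWX : W * Xᵀ = (1 - (2⁻¹ : K) • colProj X) * V * colProj X := by
    simp only [hW, colProj, Matrix.mul_assoc]
  rw [hXW, hWX]
  simp only [Matrix.mul_sub, Matrix.sub_mul, Matrix.mul_smul, Matrix.smul_mul, Matrix.mul_one,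
    Matrix.one_mul, Matrix.mul_assoc]
  match_scalars <;> field_simp
  ring

end Matrix

theorem tangent_space_fixed_rank (n k : ℕ)
    (X : Matrix (Fin n) (Fin k) ℝ) (hX : X.rank = k)
    (Xp : Matrix (Fin n) (Fin (n - k)) ℝ)
    (hXp1 : Xpᵀ * Xp = 1) (hXp2 : Xᵀ * Xp = 0)
    (V : Matrix (Fin n) (Fin n) ℝ) (hV : Vᵀ = V) :
    Xpᵀ * V * Xp = 0 ↔
      ∃ W : Matrix (Fin n) (Fin k) ℝ, V = X * Wᵀ + W * Xᵀ := by
  have hXpX : Xpᵀ * X = 0 := by rw [← transpose_transpose X, ← transpose_mul, hXp2, transpose_zero]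
  constructor
  · intro hVXp
    have hXX : IsUnit (Xᵀ * X).det := (isUnit_iff_isUnit_det _).mp <|
      isUnit_of_rank_eq_card (by rw [rank_transpose_mul_self, hX, Fintype.card_fin])
    have hkn : k ≤ n := hX ▸ (X.rank_le_card_height.trans_eq (Fintype.card_fin n))
    have hQ : Xp * Xpᵀ = 1 - colProj X := eq_sub_of_add_eq' <|
      colProj_add_mul_transpose_eq_one hXX hXp1 hXp2
        (finSumFinEquiv.trans (finCongr (by omega))).symm
    have hQVQ : (1 - colProj X) * V * (1 - colProj X) = 0 := by
      rw [← hQ]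
      calc Xp * Xpᵀ * V * (Xp * Xpᵀ) = Xp * (Xpᵀ * V * Xp) * Xpᵀ := by
            simp only [Matrix.mul_assoc]
        _ = 0 := by rw [hVXp, Matrix.mul_zero, Matrix.zero_mul]
    exact ⟨_, (eq_add_sub_of_one_sub_mul_mul_one_sub_eq_zero hQVQ).trans
      (mul_transpose_add_eq_colProj X hV _ rfl).symm⟩
  · rintro ⟨W, rfl⟩
    calc Xpᵀ * (X * Wᵀ + W * Xᵀ) * Xp = Xpᵀ * X * Wᵀ * Xp + Xpᵀ * W * (Xᵀ * Xp) := by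
          simp only [Matrix.mul_add, Matrix.add_mul, Matrix.mul_assoc]
      _ = 0 := by rw [hXpX, hXp2, Matrix.zero_mul, Matrix.zero_mul, Matrix.mul_zero, add_zero]
end

section
/- Let X = [X_r X_{k−r} 0] and Y = [Y_r Y_{l−r} 0] be n×n matrices with X^T Y = Diag(D_r, 0), D_r diagonal positive of size r, and let R = Diag(I_r, R_{n−r}) ∈ O(n) with the first (l−r) columns of R_{n−r} being (R_0; R_1). Then XRY^T = X_r Y_r^T + X_{k−r} R_0 Y_{l−r}^T, and for two such orthogonal matrices R, R′, one has sym(XRY^T) = sym(XR′Y^T) if and only if R_0 = R_0′, provided X_{k−r}^T X_{k−r} and Y_{l−r}^T Y_{l−r} are invertible and X_{k−r}^T Y_{l−r} = 0. -/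
open Matrix

/-- Symmetric part of a square matrix. -/
noncomputable def symPart {n : Type*} [Fintype n] (M : Matrix n n ℝ) : Matrix n n ℝ :=
  (1 / 2 : ℝ) • (M + Mᵀ)

/-! The block form makes `X R Yᵀ` depend on `R` only through the block `R₀`, so the claim reduces to
injectivity of `S ↦ sym(X_{k-r} S Y_{l-r}ᵀ)`. Sandwiching between `X_{k-r}ᵀ` and `Y_{l-r}` kills the
transposed half (because `X_{k-r}ᵀ Y_{l-r} = 0`) and leaves `½ (X_{k-r}ᵀ X_{k-r}) S (Y_{l-r}ᵀ Y_{l-r})`,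
from which `S` is recovered using the two invertible Gram matrices. -/

namespace Matrix

variable {α m m' r k nk l nl : Type*}

theorem fromCols_mul_fromBlocks_one_mul_transpose_fromCols [Semiring α]
    [Fintype r] [Fintype k] [Fintype nk] [Fintype l] [Fintype nl] [DecidableEq r]
    (Xr : Matrix m r α) (Xk : Matrix m k α) (Yr : Matrix m' r α) (Yl : Matrix m' l α)
    (S0 : Matrix k l α) (S1 : Matrix nk l α) (S2 : Matrix (k ⊕ nk) nl α) :
    fromCols Xr (fromCols Xk (0 : Matrix m nk α)) *
        fromBlocks (1 : Matrix r r α) 0 0 (fromCols (fromRows S0 S1) S2) *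
        (fromCols Yr (fromCols Yl (0 : Matrix m' nl α)))ᵀ =
      Xr * Yrᵀ + Xk * S0 * Ylᵀ := by
  have hXkS : fromCols Xk (0 : Matrix m nk α) * fromCols (fromRows S0 S1) S2 =
      fromCols (Xk * S0) (fromCols Xk (0 : Matrix m nk α) * S2) := by
    simp [mul_fromCols, fromCols_mul_fromRows]
  rw [fromCols_mul_fromBlocks, Matrix.mul_one, Matrix.mul_zero, Matrix.mul_zero, add_zero, zero_add,
    hXkS, transpose_fromCols, transpose_fromCols, fromCols_mul_fromRows, fromCols_mul_fromRows,
    transpose_zero, Matrix.mul_zero, add_zero]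

end Matrix

section SymPart

variable {m k l : Type*} [Fintype m] [Fintype k] [Fintype l]

theorem symPart_add (M N : Matrix m m ℝ) : symPart (M + N) = symPart M + symPart N := by
  simp only [symPart, transpose_add, ← smul_add]
  abel_nf

theorem transpose_mul_symPart_mul {A : Matrix m k ℝ} {B : Matrix m l ℝ} (hAB : Aᵀ * B = 0)
    (S : Matrix k l ℝ) :
    Aᵀ * symPart (A * S * Bᵀ) * B = (1 / 2 : ℝ) • ((Aᵀ * A) * S * (Bᵀ * B)) := by
  have hcross : Aᵀ * (A * S * Bᵀ)ᵀ * B = 0 := by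
    simp only [transpose_mul, transpose_transpose, ← Matrix.mul_assoc, hAB, Matrix.zero_mul]
  rw [symPart, Matrix.mul_smul, Matrix.smul_mul, Matrix.mul_add, Matrix.add_mul, hcross,
    add_zero]
  simp only [Matrix.mul_assoc]

theorem symPart_mul_mul_transpose_injective [DecidableEq k] [DecidableEq l]
    {A : Matrix m k ℝ} {B : Matrix m l ℝ}
    (hA : IsUnit (Aᵀ * A)) (hB : IsUnit (Bᵀ * B)) (hAB : Aᵀ * B = 0) :
    Function.Injective fun S : Matrix k l ℝ => symPart (A * S * Bᵀ) := by
  obtain ⟨_⟩ := hA.nonempty_invertible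
  obtain ⟨_⟩ := hB.nonempty_invertible
  intro S T hST
  have hsandwich := congrArg (fun M => Aᵀ * M * B) hST
  simp only [transpose_mul_symPart_mul hAB] at hsandwich
  exact mul_right_injective_of_invertible _ (mul_left_injective_of_invertible _
    (smul_right_injective _ (by norm_num : (1 / 2 : ℝ) ≠ 0) hsandwich))

end SymPart

theorem block_geodesic_parametrization_general (n r kr nk lr nl : ℕ)
    (Xr : Matrix (Fin n) (Fin r) ℝ) (Xk : Matrix (Fin n) (Fin kr) ℝ)
    (Yr : Matrix (Fin n) (Fin r) ℝ) (Yl : Matrix (Fin n) (Fin lr) ℝ)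
    (R0 R0' : Matrix (Fin kr) (Fin lr) ℝ) (R1 R1' : Matrix (Fin nk) (Fin lr) ℝ)
    (R2 R2' : Matrix (Fin kr ⊕ Fin nk) (Fin nl) ℝ)
    (hXk : IsUnit (Xkᵀ * Xk)) (hYl : IsUnit (Ylᵀ * Yl)) (hXYl : Xkᵀ * Yl = 0)
    (X : Matrix (Fin n) (Fin r ⊕ (Fin kr ⊕ Fin nk)) ℝ)
    (hX : X = Matrix.fromCols Xr (Matrix.fromCols Xk 0))
    (Y : Matrix (Fin n) (Fin r ⊕ (Fin lr ⊕ Fin nl)) ℝ)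
    (hY : Y = Matrix.fromCols Yr (Matrix.fromCols Yl 0))
    (R R' : Matrix (Fin r ⊕ (Fin kr ⊕ Fin nk)) (Fin r ⊕ (Fin lr ⊕ Fin nl)) ℝ)
    (hR : R = Matrix.fromBlocks 1 0 0 (Matrix.fromCols (Matrix.fromRows R0 R1) R2))
    (hR' : R' = Matrix.fromBlocks 1 0 0 (Matrix.fromCols (Matrix.fromRows R0' R1') R2')) :
    X * R * Yᵀ = Xr * Yrᵀ + Xk * R0 * Ylᵀ ∧
    (symPart (X * R * Yᵀ) = symPart (X * R' * Yᵀ) ↔ R0 = R0') := by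
  subst hX hY hR hR'
  rw [fromCols_mul_fromBlocks_one_mul_transpose_fromCols,
    fromCols_mul_fromBlocks_one_mul_transpose_fromCols]
  refine ⟨rfl, ?_⟩
  rw [symPart_add, symPart_add, add_right_inj]
  exact (symPart_mul_mul_transpose_injective hXk hYl hXYl).eq_iff

theorem block_geodesic_parametrization (n r kr nk lr nl : ℕ)
    (Xr : Matrix (Fin n) (Fin r) ℝ) (Xk : Matrix (Fin n) (Fin kr) ℝ)
    (Yr : Matrix (Fin n) (Fin r) ℝ) (Yl : Matrix (Fin n) (Fin lr) ℝ)
    (D : Fin r → ℝ) (hD : ∀ i, 0 < D i)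
    (R0 R0' : Matrix (Fin kr) (Fin lr) ℝ) (R1 R1' : Matrix (Fin nk) (Fin lr) ℝ)
    (R2 R2' : Matrix (Fin kr ⊕ Fin nk) (Fin nl) ℝ)
    (hXk : IsUnit (Xkᵀ * Xk)) (hYl : IsUnit (Ylᵀ * Yl)) (hXYl : Xkᵀ * Yl = 0)
    (X : Matrix (Fin n) (Fin r ⊕ (Fin kr ⊕ Fin nk)) ℝ)
    (hX : X = Matrix.fromCols Xr (Matrix.fromCols Xk 0))
    (Y : Matrix (Fin n) (Fin r ⊕ (Fin lr ⊕ Fin nl)) ℝ)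
    (hY : Y = Matrix.fromCols Yr (Matrix.fromCols Yl 0))
    (hXY : Xᵀ * Y = Matrix.fromBlocks (Matrix.diagonal D) 0 0 0)
    (R R' : Matrix (Fin r ⊕ (Fin kr ⊕ Fin nk)) (Fin r ⊕ (Fin lr ⊕ Fin nl)) ℝ)
    (hR : R = Matrix.fromBlocks 1 0 0 (Matrix.fromCols (Matrix.fromRows R0 R1) R2))
    (hR' : R' = Matrix.fromBlocks 1 0 0 (Matrix.fromCols (Matrix.fromRows R0' R1') R2'))
    (hRo : Rᵀ * R = 1) (hRo' : R'ᵀ * R' = 1) :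
    X * R * Yᵀ = Xr * Yrᵀ + Xk * R0 * Ylᵀ ∧
    (symPart (X * R * Yᵀ) = symPart (X * R' * Yᵀ) ↔ R0 = R0') :=
  block_geodesic_parametrization_general n r kr nk lr nl Xr Xk Yr Yl R0 R0' R1 R1' R2 R2' hXk hYl
    hXYl X hX Y hY R R' hR hR'
end
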